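/- arXiv:2107.08859 — 2 statements merged into one kernel-verified Lean document; each statement's English description precedes it below -/
import Mathlib

section
/- Let Σ be a compact, geodesically complete CAT(1) space with diameter π. Then for all ξ, η ∈ Σ, the antipodal distance satisfies ‖ξη‖ := sup_{x∈Σ} (|ξx| + |ηx| − π) = sup_{ξ̄ ∈ Ant(ξ)} |ξ̄η|, where Ant(ξ) = {ξ̄ ∈ Σ : |ξξ̄| = π} is the set of antipodes of ξ. -/
/-!
Common definitions for the formalization of
"Regularity of distance maps on geodesically complete spaces with curvature bounded above".

We set up, from scratch, the metric-geometric notions used in the paper: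
comparison angles, (upper) Alexandrov angles, geodesic completeness, CAT(1) and CAT(κ)
comparison (via existence of midpoints satisfying the model median comparison inequality),
GCBA spaces, tiny balls, the antipodal distance, strainers and noncritical distance maps.

Directions at a point `p` (elements of the space of directions `Σ_p`) are represented by
points `x ≠ p`, via the (unique, in the situations considered) shortest path from `p` to `x`;
by local geodesic completeness such directions are dense in `Σ_p`, so distances and
suprema over `Σ_p` are faithfully expressed through angles `∠(a, p, x)` and suprema over
points `x` near `p`.  The local dimension `dim T_p` of the tangent cone at `p` is expressed
as the infimum of the Hausdorff dimensions of small balls around `p`, which for GCBA spaces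
coincides with `dim T_p` by the results of Lytchak–Nagano.
-/

open Metric Filter Set Topology
open scoped ENNReal NNReal Real

noncomputable section

/-- `Between p z a` means that `z` lies on a shortest path from `p` to `a`. -/
def Between {X : Type*} [MetricSpace X] (p z a : X) : Prop :=
  dist p z + dist z a = dist p a

/-- The Euclidean comparison angle `∠̃ a p b` at the vertex `p` of the triple `(a, p, b)`. -/
def compAngle {X : Type*} [MetricSpace X] (a p b : X) : ℝ :=
  Real.arccos ((dist p a ^ 2 + dist p b ^ 2 - dist a b ^ 2) / (2 * dist p a * dist p b))

/-- The upper (Alexandrov) angle at `p` between the shortest paths from `p` to `a` and from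
`p` to `b`: the limit of comparison angles at pairs of points approaching `p` along these
shortest paths.  This is the distance in the space of directions `Σ_p` between the directions
`a'` and `b'`. -/
def alexAngle {X : Type*} [MetricSpace X] (a p b : X) : ℝ :=
  Filter.limsup (fun q : X × X => compAngle q.1 p q.2)
    ((𝓝[{z | Between p z a} \ {p}] p) ×ˢ (𝓝[{z | Between p z b} \ {p}] p))

/-- `γ` is a unit-speed local geodesic on the interval `[a, b]`. -/
def IsLocalGeodesicOn {X : Type*} [MetricSpace X] (γ : ℝ → X) (a b : ℝ) : Prop :=
  ∀ t ∈ Set.Icc a b, ∃ ε > 0, ∀ u ∈ Set.Icc a b, ∀ v ∈ Set.Icc a b,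
    |u - t| ≤ ε → |v - t| ≤ ε → dist (γ u) (γ v) = |u - v|

/-- (Local) geodesic completeness: every geodesic can be extended, as a local geodesic,
beyond both of its endpoints. -/
def GeodesicallyComplete (X : Type*) [MetricSpace X] : Prop :=
  ∀ (γ : ℝ → X) (a b : ℝ), a < b → IsLocalGeodesicOn γ a b →
    ∃ (a' b' : ℝ) (γ' : ℝ → X), a' < a ∧ b < b' ∧ IsLocalGeodesicOn γ' a' b' ∧
      ∀ t ∈ Set.Icc a b, γ' t = γ t

/-- The CAT(1) condition: any two points at distance `< π` have a midpoint, and midpoints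
satisfy the spherical median comparison inequality against all triangles of perimeter
`< 2π` (this characterizes CAT(1) among complete metric spaces). -/
def IsCATOne (X : Type*) [MetricSpace X] : Prop :=
  ∀ x y : X, dist x y < π → ∃ m : X,
    dist x m = dist x y / 2 ∧ dist y m = dist x y / 2 ∧
    ∀ z : X, dist z x + dist z y + dist x y < 2 * π →
      (Real.cos (dist z x) + Real.cos (dist z y)) / 2 ≤
        Real.cos (dist z m) * Real.cos (dist x y / 2)

/-- The median comparison inequality in the model surface of constant curvature `κ`:
`dzm` is compared with the median of the comparison triangle with sides `dzx`, `dzy`, `dxy`. -/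
def MedianComparison (κ dzm dxy dzx dzy : ℝ) : Prop :=
  if 0 < κ then
    (Real.cos (Real.sqrt κ * dzx) + Real.cos (Real.sqrt κ * dzy)) / 2 ≤
      Real.cos (Real.sqrt κ * dzm) * Real.cos (Real.sqrt κ * dxy / 2)
  else if κ = 0 then
    dzm ^ 2 ≤ (dzx ^ 2 + dzy ^ 2) / 2 - dxy ^ 2 / 4
  else
    Real.cosh (Real.sqrt (-κ) * dzm) * Real.cosh (Real.sqrt (-κ) * dxy / 2) ≤
      (Real.cosh (Real.sqrt (-κ) * dzx) + Real.cosh (Real.sqrt (-κ) * dzy)) / 2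

/-- `S` (with the induced metric) is a CAT(κ) space: any two points of `S` at distance less
than the model diameter `D_κ` have a midpoint in `S`, and midpoints satisfy the `κ`-median
comparison inequality against triangles of perimeter `< 2 D_κ`. -/
def IsCATOn {X : Type*} [MetricSpace X] (κ : ℝ) (S : Set X) : Prop :=
  ∀ x ∈ S, ∀ y ∈ S, (0 < κ → dist x y < π / Real.sqrt κ) → ∃ m ∈ S,
    dist x m = dist x y / 2 ∧ dist y m = dist x y / 2 ∧
    ∀ z ∈ S, (0 < κ → dist z x + dist z y + dist x y < 2 * (π / Real.sqrt κ)) →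
      MedianComparison κ (dist z m) (dist x y) (dist z x) (dist z y)

/-- A GCBA space: a separable, locally compact, locally geodesically complete metric space
with curvature (locally) bounded above. -/
def IsGCBA (X : Type*) [MetricSpace X] : Prop :=
  TopologicalSpace.SeparableSpace X ∧ LocallyCompactSpace X ∧
    (∀ p : X, ∃ (κ : ℝ) (r : ℝ), 0 < r ∧ IsCATOn κ (closedBall p r)) ∧
    GeodesicallyComplete X

/-- A tiny ball in a GCBA space: a metric ball `B(center, r)` with
`r < min (D_κ / 100) 1` whose closed concentric ball of radius `10 r` is a compact CAT(κ)
space.  We also record the standard properties of tiny balls used throughout the paper: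
any two points of the tiny ball are joined by a unique shortest path contained in it, and
every such shortest path extends to a shortest path of length `9 r`. -/
structure TinyBall (X : Type*) [MetricSpace X] where
  /-- the upper curvature bound -/
  κ : ℝ
  center : X
  r : ℝ
  r_pos : 0 < r
  r_lt_one : r < 1
  r_small : 0 < κ → r < π / Real.sqrt κ / 100
  compact : IsCompact (closedBall center (10 * r))
  cat : IsCATOn κ (closedBall center (10 * r))
  unique_geod : ∀ p ∈ ball center r, ∀ q ∈ ball center r, ∀ t ∈ Set.Icc (0 : ℝ) (dist p q),
    ∃ z ∈ ball center r, (dist p z = t ∧ dist z q = dist p q - t) ∧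
      ∀ w ∈ closedBall center (10 * r), dist p w = t ∧ dist w q = dist p q - t → w = z
  extend_geod : ∀ p ∈ ball center r, ∀ q ∈ ball center r, p ≠ q → ∃ γ : ℝ → X,
    γ 0 = p ∧ γ (dist p q) = q ∧ (∀ t ∈ Set.Icc (0 : ℝ) (9 * r), γ t ∈ closedBall center (10 * r)) ∧
    ∀ t ∈ Set.Icc (0 : ℝ) (9 * r), ∀ u ∈ Set.Icc (0 : ℝ) (9 * r), dist (γ t) (γ u) = |t - u|

/-- The underlying set of a tiny ball. -/
def TinyBall.U {X : Type*} [MetricSpace X] (B : TinyBall X) : Set X :=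
  ball B.center B.r

/-- The antipodal distance `‖ξη‖ = sup_x (|ξx| + |ηx| - π)` on a
compact geodesically complete CAT(1) space of diameter `π`. -/
def antDist {X : Type*} [MetricSpace X] (ξ η : X) : ℝ :=
  sSup {s : ℝ | ∃ x : X, s = dist ξ x + dist η x - π}

/-- The set of antipodes of `ξ`. -/
def Ant {X : Type*} [MetricSpace X] (ξ : X) : Set X :=
  {x : X | dist ξ x = π}

/-- An `(ε, δ)`-noncritical collection `{ξ_i}` with regular direction `η` in a compact
geodesically complete CAT(1) space of diameter `π`. -/
def IsNoncritColl {X : Type*} [MetricSpace X] {k : ℕ} (ξ : Fin k → X) (η : X) (ε δ : ℝ) :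
    Prop :=
  (∀ i j, i ≠ j → antDist (ξ i) (ξ j) < π / 2 + δ) ∧ ∀ i, antDist (ξ i) η < π / 2 - ε

/-- The antipodal distance `‖a' b'‖` between the directions `a'`, `b'` in the space of
directions `Σ_p`: the supremum of `|a' x'| + |b' x'| - π` over the directions `x'` of
shortest paths from `p` to points `x` of `S`.  (By local geodesic completeness these
directions are dense in `Σ_p`, so this agrees with the supremum over all of `Σ_p`.) -/
def antAngle {X : Type*} [MetricSpace X] (S : Set X) (p a b : X) : ℝ :=
  sSup {s : ℝ | ∃ x ∈ S, x ≠ p ∧ dist p x < π ∧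
    s = alexAngle a p x + alexAngle b p x - π}

/-- The distance map `x ↦ (|a_1 x|, …, |a_k x|)` with values in Euclidean space. -/
def distMap {X : Type*} [MetricSpace X] {k : ℕ} (a : Fin k → X) (x : X) :
    EuclideanSpace ℝ (Fin k) :=
  WithLp.toLp 2 (fun i => dist (a i) x)

/-- The local dimension at `p`, i.e. the dimension `dim T_p` of the tangent cone at `p`:
for GCBA spaces it equals the Hausdorff dimension of all sufficiently small balls around
`p` (Lytchak–Nagano). -/
def localDim {X : Type*} [MetricSpace X] (p : X) : ℝ≥0∞ :=
  ⨅ (r : ℝ) (_ : 0 < r), dimH (ball p r)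

/-- `f` is `c`-open on `S`: for every `x ∈ S` and all sufficiently small `r > 0`,
`B(f x, c r) ⊆ f (B(x, r))`. -/
def IsOpenAtScale {X Y : Type*} [MetricSpace X] [MetricSpace Y] (c : ℝ) (f : X → Y)
    (S : Set X) : Prop :=
  ∀ x ∈ S, ∃ r₀ > 0, ∀ r : ℝ, 0 < r → r < r₀ →
    ball (f x) (c * r) ⊆ f '' (ball x r ∩ S)

/-- Definition 1.1: the distance map `(|a_1 ⬝|, …, |a_k ⬝|)` is `(ε, δ)`-noncritical at
`p ∈ U`:  `‖a_i' a_j'‖ < π/2 + δ` in `Σ_p` for all `i ≠ j`, and there is `b ∈ U` with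
`‖a_i' b'‖ < π/2 - ε` in `Σ_p` for all `i`. -/
def IsNoncriticalAt {X : Type*} [MetricSpace X] (B : TinyBall X) {k : ℕ} (a : Fin k → X)
    (ε δ : ℝ) (p : X) : Prop :=
  p ∈ B.U ∧ (∀ i, a i ∈ B.U ∧ a i ≠ p) ∧
    (∀ i j, i ≠ j → antAngle B.U p (a i) (a j) < π / 2 + δ) ∧
    ∃ b ∈ B.U, b ≠ p ∧ ∀ i, antAngle B.U p (a i) b < π / 2 - ε

/-- Definition 5.2: the distance map `(|a_1 ⬝|, …, |a_k ⬝|)` is `(ε, δ, ρ)`-noncritical at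
`p ∈ U`, a quantitative version of noncriticality formulated via comparison angles. -/
def IsNoncriticalAt' {X : Type*} [MetricSpace X] (B : TinyBall X) {k : ℕ} (a : Fin k → X)
    (ε δ ρ : ℝ) (p : X) : Prop :=
  p ∈ B.U ∧ 0 < ρ ∧ ρ < B.r ∧ (∀ i, a i ∈ B.U) ∧ (∀ i, ρ < dist (a i) p) ∧
    (∀ x ∈ ball p ρ, x ≠ p → ∀ i j, i ≠ j →
      compAngle (a i) p x + compAngle (a j) p x < 3 * π / 2 + δ) ∧
    ∃ b ∈ B.U, ρ < dist b p ∧ ∀ x ∈ ball p ρ, x ≠ p → ∀ i,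
      compAngle (a i) p x + compAngle b p x < 3 * π / 2 - ε

/-- `f` has directional derivative `L` at `p` in the direction of the shortest path from
`p` to `x`. -/
def HasDirDeriv {X : Type*} [MetricSpace X] (f : X → ℝ) (p x : X) (L : ℝ) : Prop :=
  Filter.Tendsto (fun z => (f z - f p) / dist p z)
    (𝓝[{z | Between p z x} \ {p}] p) (𝓝 L)

/-- A Hurewicz fibration: a continuous map satisfying the homotopy lifting property with
respect to every topological space. -/
def IsHurewiczFibration {A B : Type*} [TopologicalSpace A] [TopologicalSpace B]
    (f : A → B) : Prop :=
  Continuous f ∧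
    ∀ (Z : Type) [TopologicalSpace Z], ∀ (g : C(Z, A)) (H : C(Z × unitInterval, B)),
      (∀ z, H (z, 0) = f (g z)) →
      ∃ G : C(Z × unitInterval, A), (∀ z, G (z, 0) = g z) ∧ ∀ q, f (G q) = H q

/-- `s` is contractible inside `t`: the inclusion `s ↪ t` is homotopic in `t` to a
constant map. -/
def ContractibleIn {X : Type*} [TopologicalSpace X] (s t : Set X) : Prop :=
  s ⊆ t ∧ ∃ (H : C(↥s × unitInterval, X)) (x₀ : X), x₀ ∈ t ∧
    (∀ z : s, H (z, 0) = (z : X)) ∧ (∀ z : s, H (z, 1) = x₀) ∧ ∀ q, H q ∈ t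

/-- Definition 3.3 (localized to a set `S`): `f` has locally uniformly contractible fibers
on `S`. -/
def LocUnifContractibleFibersOn {X : Type*} [TopologicalSpace X] {Y : Type*} (f : X → Y)
    (S : Set X) : Prop :=
  ∀ x ∈ S, ∀ U' : Set X, IsOpen U' → x ∈ U' →
    ∃ V : Set X, IsOpen V ∧ x ∈ V ∧ V ⊆ U' ∧
      ∀ y : Y, (f ⁻¹' {y} ∩ S ∩ V).Nonempty →
        ContractibleIn (f ⁻¹' {y} ∩ S ∩ V) (f ⁻¹' {y} ∩ S ∩ U')

/-- A manifold point: a point having a neighborhood homeomorphic to a Euclidean space. -/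
def IsManifoldPoint (X : Type*) [TopologicalSpace X] (p : X) : Prop :=
  ∃ (n : ℕ) (V : Set X), IsOpen V ∧ p ∈ V ∧ Nonempty (↥V ≃ₜ EuclideanSpace ℝ (Fin n))

end


noncomputable section Statement0Aux
namespace Statement0Aux
set_option linter.unusedSectionVars false
open Metric Filter Set Topology
open scoped Real

variable {Y : Type*} [MetricSpace Y] [CompactSpace Y]

/-- a chosen midpoint -/
def catMid (hcat : IsCATOne Y) (x y : Y) : Y :=
  if h : dist x y < π then (hcat x y h).choose else x

lemma catMid_dist_left (hcat : IsCATOne Y) {x y : Y} (h : dist x y < π) :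
    dist x (catMid hcat x y) = dist x y / 2 := by
  rw [catMid, dif_pos h]; exact (hcat x y h).choose_spec.1

lemma catMid_dist_right (hcat : IsCATOne Y) {x y : Y} (h : dist x y < π) :
    dist y (catMid hcat x y) = dist x y / 2 := by
  rw [catMid, dif_pos h]; exact (hcat x y h).choose_spec.2.1

lemma catMid_comparison (hcat : IsCATOne Y) {x y : Y} (h : dist x y < π) (z : Y)
    (hz : dist z x + dist z y + dist x y < 2 * π) :
    (Real.cos (dist z x) + Real.cos (dist z y)) / 2 ≤
      Real.cos (dist z (catMid hcat x y)) * Real.cos (dist x y / 2) := by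
  rw [catMid, dif_pos h]; exact (hcat x y h).choose_spec.2.2 z hz

/-- dyadic approximations: `geoSeq hcat x y n k` is the point at parameter `k / 2^n`. -/
def geoSeq (hcat : IsCATOne Y) (x y : Y) : ℕ → ℕ → Y
  | 0 => fun k => if k = 0 then x else y
  | (n+1) => fun k =>
      if k % 2 = 0 then geoSeq hcat x y n (k / 2)
      else catMid hcat (geoSeq hcat x y n (k / 2)) (geoSeq hcat x y n (k / 2 + 1))

lemma geoSeq_even (hcat : IsCATOne Y) (x y : Y) (n k : ℕ) :
    geoSeq hcat x y (n+1) (2*k) = geoSeq hcat x y n k := by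
  simp [geoSeq, Nat.mul_mod_right, Nat.mul_div_cancel_left]

lemma geoSeq_odd (hcat : IsCATOne Y) (x y : Y) (n k : ℕ) :
    geoSeq hcat x y (n+1) (2*k+1) =
      catMid hcat (geoSeq hcat x y n k) (geoSeq hcat x y n (k+1)) := by
  have h1 : (2*k+1) % 2 = 1 := by omega
  have h2 : (2*k+1) / 2 = k := by omega
  simp [geoSeq, h1, h2]

lemma geoSeq_spec (hcat : IsCATOne Y) (x y : Y) (hd : dist x y < π) (n : ℕ) :
    geoSeq hcat x y n 0 = x ∧ (∀ k, 2^n ≤ k → geoSeq hcat x y n k = y) ∧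
      ∀ k, dist (geoSeq hcat x y n k) (geoSeq hcat x y n (k+1)) ≤ dist x y / 2^n ∧
        (k < 2^n → dist (geoSeq hcat x y n k) (geoSeq hcat x y n (k+1)) = dist x y / 2^n) := by
  induction n with
  | zero =>
    refine ⟨rfl, fun k hk => by simp [geoSeq]; omega, fun k => ?_⟩
    rcases Nat.eq_zero_or_pos k with rfl | hk
    · simp [geoSeq]
    · constructor
      · simp only [geoSeq]
        rw [if_neg (by omega), if_neg (by omega), dist_self]
        positivity
      · intro h; omega
  | succ n ih =>
    obtain ⟨h0, hy, hadj⟩ := ih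
    have hadjlt : ∀ k, dist (geoSeq hcat x y n k) (geoSeq hcat x y n (k+1)) < π := by
      intro k
      refine lt_of_le_of_lt ((hadj k).1) (lt_of_le_of_lt ?_ hd)
      have : (1:ℝ) ≤ 2^n := one_le_pow₀ one_le_two
      calc dist x y / 2^n ≤ dist x y / 1 := by
            apply div_le_div_of_nonneg_left dist_nonneg one_pos this
        _ = dist x y := by ring
    have key : ∀ k, dist (geoSeq hcat x y (n+1) k) (geoSeq hcat x y (n+1) (k+1)) ≤ dist x y / 2^(n+1) ∧
        (k < 2^(n+1) → dist (geoSeq hcat x y (n+1) k) (geoSeq hcat x y (n+1) (k+1)) = dist x y / 2^(n+1)) := by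
      intro k
      rcases Nat.even_or_odd k with ⟨j, hj⟩ | ⟨j, hj⟩
      · subst hj
        have h2j : 2*j = j*2 := by ring
        rw [show j + j = 2*j by ring, show 2*j+1 = 2*j+1 from rfl, geoSeq_even, geoSeq_odd]
        rw [catMid_dist_left hcat (hadjlt j)]
        constructor
        · calc dist (geoSeq hcat x y n j) (geoSeq hcat x y n (j+1)) / 2
              ≤ (dist x y / 2^n) / 2 := by linarith [(hadj j).1]
            _ = dist x y / 2^(n+1) := by ring
        · intro hk
          have hj' : j < 2^n := by
            have : 2*j < 2^(n+1) := by omega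
            simpa [pow_succ] using by omega
          rw [(hadj j).2 hj']; ring
      · subst hj
        rw [show 2*j+1+1 = 2*(j+1) by ring, geoSeq_odd, geoSeq_even]
        rw [dist_comm, catMid_dist_right hcat (hadjlt j)]
        constructor
        · calc dist (geoSeq hcat x y n j) (geoSeq hcat x y n (j+1)) / 2
              ≤ (dist x y / 2^n) / 2 := by linarith [(hadj j).1]
            _ = dist x y / 2^(n+1) := by ring
        · intro hk
          have hj' : j < 2^n := by
            have h2 : 2^(n+1) = 2*2^n := by ring
            omega
          rw [(hadj j).2 hj']; ring
    refine ⟨?_, ?_, key⟩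
    · rw [show (0:ℕ) = 2*0 by ring, geoSeq_even]; exact h0
    · intro k hk
      rcases Nat.even_or_odd k with ⟨j, hj⟩ | ⟨j, hj⟩
      · subst hj
        rw [show j+j = 2*j by ring, geoSeq_even]
        exact hy j (by rw [pow_succ] at hk; omega)
      · subst hj
        rw [geoSeq_odd]
        have hjy : geoSeq hcat x y n j = y := hy j (by rw [pow_succ] at hk; omega)
        have hjy' : geoSeq hcat x y n (j+1) = y := hy (j+1) (by rw [pow_succ] at hk; omega)
        rw [hjy, hjy']
        have : dist y y < π := by rw [dist_self]; exact Real.pi_pos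
        have := catMid_dist_left hcat this
        rw [dist_self] at this
        have := dist_eq_zero.mp (by linarith : dist y (catMid hcat y y) = 0)
        exact this.symm


-- chain bound
lemma geoSeq_chain (hcat : IsCATOne Y) (x y : Y) (hd : dist x y < π) (n j c : ℕ) :
    dist (geoSeq hcat x y n j) (geoSeq hcat x y n (j + c)) ≤ c * (dist x y / 2^n) := by
  induction c with
  | zero => simp
  | succ c ih =>
    calc dist (geoSeq hcat x y n j) (geoSeq hcat x y n (j + (c+1)))
        ≤ dist (geoSeq hcat x y n j) (geoSeq hcat x y n (j + c)) +
          dist (geoSeq hcat x y n (j+c)) (geoSeq hcat x y n (j+c+1)) := by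
          rw [show j + (c+1) = j + c + 1 by ring]; exact dist_triangle _ _ _
      _ ≤ c * (dist x y / 2^n) + dist x y / 2^n :=
          add_le_add ih ((geoSeq_spec hcat x y hd n).2.2 (j+c)).1
      _ = ((c+1 : ℕ)) * (dist x y / 2^n) := by push_cast; ring

lemma geoSeq_dist (hcat : IsCATOne Y) (x y : Y) (hd : dist x y < π) (n : ℕ)
    {j k : ℕ} (hjk : j ≤ k) (hk : k ≤ 2^n) :
    dist (geoSeq hcat x y n j) (geoSeq hcat x y n k) = (k - j : ℝ) * (dist x y / 2^n) := by
  obtain ⟨h0, hy, _⟩ := geoSeq_spec hcat x y hd n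
  have hub : ∀ a b : ℕ, a ≤ b → dist (geoSeq hcat x y n a) (geoSeq hcat x y n b) ≤ (b - a : ℝ) * (dist x y / 2^n) := by
    intro a b hab
    obtain ⟨c, rfl⟩ := Nat.exists_eq_add_of_le hab
    have := geoSeq_chain hcat x y hd n a c
    push_cast
    simpa using this
  have hxy : dist (geoSeq hcat x y n 0) (geoSeq hcat x y n (2^n)) = dist x y := by
    rw [h0, hy (2^n) le_rfl]
  have h1 := hub 0 j (Nat.zero_le j)
  have h2 := hub k (2^n) hk
  have h3 := hub j k hjk
  have htri : dist x y ≤ dist (geoSeq hcat x y n 0) (geoSeq hcat x y n j) +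
      dist (geoSeq hcat x y n j) (geoSeq hcat x y n k) +
      dist (geoSeq hcat x y n k) (geoSeq hcat x y n (2^n)) := by
    rw [← hxy]; exact dist_triangle4 _ _ _ _
  have hcast : ((2:ℝ)^n) = ((2^n : ℕ) : ℝ) := by push_cast; ring
  have hpow : (0:ℝ) < 2^n := by positivity
  have hjr : (j:ℝ) ≤ k := by exact_mod_cast hjk
  have hkr : (k:ℝ) ≤ 2^n := by rw [hcast]; exact_mod_cast hk
  have hd2 : dist x y = (2:ℝ)^n * (dist x y / 2^n) := by field_simp
  push_cast at h1 h2 h3 ⊢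
  linarith

lemma geoSeq_lvlp (hcat : IsCATOne Y) (x y : Y) (n m k : ℕ) :
    geoSeq hcat x y (n+m) (2^m * k) = geoSeq hcat x y n k := by
  induction m with
  | zero => simp
  | succ m ih =>
    have : 2^(m+1) * k = 2 * (2^m * k) := by ring
    rw [show n + (m+1) = (n+m)+1 by ring, this, geoSeq_even, ih]


lemma geoSeq_distp (hcat : IsCATOne Y) (x y : Y) (hd : dist x y < π) (n : ℕ)
    {j k : ℕ} (hj : j ≤ 2^n) (hk : k ≤ 2^n) :
    dist (geoSeq hcat x y n j) (geoSeq hcat x y n k) = |(j:ℝ) - k| * (dist x y / 2^n) := by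
  rcases le_total j k with h | h
  · rw [geoSeq_dist hcat x y hd n h hk, abs_sub_comm, abs_of_nonneg (by exact_mod_cast sub_nonneg.mpr (by exact_mod_cast h : (j:ℝ) ≤ k))]
  · rw [dist_comm, geoSeq_dist hcat x y hd n h hj, abs_of_nonneg (sub_nonneg.mpr (by exact_mod_cast h))]

lemma exists_geodesic [CompleteSpace Y] (hcat : IsCATOne Y) (x y : Y) (hd : dist x y < π) :
    ∃ γ : ℝ → Y, γ 0 = x ∧ γ (dist x y) = y ∧
      ∀ s ∈ Icc (0:ℝ) (dist x y), ∀ t ∈ Icc (0:ℝ) (dist x y), dist (γ s) (γ t) = |s - t| := by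
  set d := dist x y with hdd
  rcases eq_or_lt_of_le (dist_nonneg : 0 ≤ d) with h0 | h0
  · have hxy : x = y := dist_eq_zero.mp h0.symm
    refine ⟨fun _ => x, rfl, hxy, ?_⟩
    intro s hs t ht
    have hd0 : d = 0 := h0.symm
    have hs' : s = 0 := le_antisymm (hd0 ▸ hs.2) hs.1
    have ht' : t = 0 := le_antisymm (hd0 ▸ ht.2) ht.1
    simp [hs', ht']
  -- clip and dyadic index
  set clip : ℝ → ℝ := fun t => max 0 (min t 1) with hclip
  have hclip0 : ∀ t, 0 ≤ clip t := fun t => le_max_left _ _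
  have hclip1 : ∀ t, clip t ≤ 1 := fun t => max_le (by norm_num) (min_le_right _ _)
  have hclipid : ∀ t, 0 ≤ t → t ≤ 1 → clip t = t := by
    intro t h1 h2; simp [hclip, min_eq_left h2, max_eq_right h1]
  set K : ℕ → ℝ → ℕ := fun n t => ⌊clip t * 2^n⌋₊ with hK
  have hKle : ∀ n t, K n t ≤ 2^n := by
    intro n t
    have : clip t * 2^n ≤ (2^n : ℕ) := by
      push_cast
      nlinarith [hclip1 t, pow_pos (by norm_num : (0:ℝ) < 2) n]
    calc K n t ≤ ⌊((2^n : ℕ) : ℝ)⌋₊ := Nat.floor_le_floor this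
      _ = 2^n := Nat.floor_natCast _
  have hKlb : ∀ n t, (K n t : ℝ) ≤ clip t * 2^n := fun n t =>
    Nat.floor_le (by positivity)
  have hKub : ∀ n t, clip t * 2^n < K n t + 1 := fun n t => Nat.lt_floor_add_one _
  set u : ℝ → ℕ → Y := fun t n => geoSeq hcat x y n (K n t) with hu
  -- cauchy estimate
  have hest : ∀ t n m, n ≤ m → dist (u t n) (u t m) ≤ d / 2^n := by
    intro t n m hnm
    obtain ⟨c, rfl⟩ := Nat.exists_eq_add_of_le hnm
    have h1 : u t n = geoSeq hcat x y (n+c) (2^c * K n t) := (geoSeq_lvlp hcat x y n c _).symm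
    rw [h1, hu]
    have ha : 2^c * K n t ≤ 2^(n+c) := by
      calc 2^c * K n t ≤ 2^c * 2^n := Nat.mul_le_mul_left _ (hKle n t)
        _ = 2^(n+c) := by rw [pow_add]; ring
    rw [geoSeq_distp hcat x y hd (n+c) ha (hKle (n+c) t)]
    have hpc : (0:ℝ) < 2^c := by positivity
    have hpn : (0:ℝ) < 2^n := by positivity
    have hpa : (2:ℝ)^(n+c) = 2^n * 2^c := pow_add 2 n c
    have hablb : clip t * 2^(n+c) - 2^c < ((2^c * K n t : ℕ) : ℝ) := by
      push_cast
      have h := mul_lt_mul_of_pos_right (hKub n t) hpc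
      rw [hpa]; nlinarith
    have haub : ((2^c * K n t : ℕ) : ℝ) ≤ clip t * 2^(n+c) := by
      push_cast
      have h := mul_le_mul_of_nonneg_right (hKlb n t) hpc.le
      rw [hpa]; nlinarith
    have hblb : clip t * 2^(n+c) - 2^c < (K (n+c) t : ℝ) := by
      have := hKub (n+c) t
      have h1c : (1:ℝ) ≤ 2^c := one_le_pow₀ one_le_two
      linarith
    have hbub : (K (n+c) t : ℝ) ≤ clip t * 2^(n+c) := hKlb (n+c) t
    have habs : |((2^c * K n t : ℕ) : ℝ) - (K (n+c) t : ℝ)| ≤ 2^c := by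
      rw [abs_le]; constructor <;> linarith
    calc |((2^c * K n t : ℕ) : ℝ) - (K (n+c) t : ℝ)| * (d / 2^(n+c))
        ≤ 2^c * (d / 2^(n+c)) := by
          apply mul_le_mul_of_nonneg_right habs (by positivity)
      _ = d / 2^n := by rw [pow_add]; field_simp
  have hcauchy : ∀ t, CauchySeq (u t) := by
    intro t
    rw [Metric.cauchySeq_iff']
    intro ε hε
    obtain ⟨N, hN⟩ : ∃ N : ℕ, d / 2^N < ε := by
      obtain ⟨N, hN⟩ := pow_unbounded_of_one_lt (d / ε) (by norm_num : (1:ℝ) < 2)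
      have h1 : d < 2^N * ε := by
        have := (div_lt_iff₀ hε).1 hN
        linarith
      exact ⟨N, by rw [div_lt_iff₀ (by positivity : (0:ℝ) < 2^N)]; linarith⟩
    exact ⟨N, fun n hn => lt_of_le_of_lt (by rw [dist_comm]; exact hest t N n hn) hN⟩
  have hlim : ∀ t : ℝ, ∃ z : Y, Tendsto (u t) atTop (𝓝 z) :=
    fun t => cauchySeq_tendsto_of_complete (hcauchy t)
  choose γ₀ hγ₀ using hlim
  -- convergence of dyadic parameters
  have hKtend : ∀ t, Tendsto (fun n => (K n t : ℝ) / 2^n) atTop (𝓝 (clip t)) := by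
    intro t
    rw [tendsto_iff_dist_tendsto_zero]
    apply squeeze_zero (fun n => dist_nonneg) (g := fun n => (1/2:ℝ)^n)
    · intro n
      have hpn : (0:ℝ) < 2^n := by positivity
      have e : (K n t:ℝ)/2^n - clip t = ((K n t:ℝ) - clip t * 2^n)/2^n := by
        field_simp
      have habs : |(K n t:ℝ) - clip t*2^n| ≤ 1 :=
        abs_le.2 ⟨by linarith [hKub n t], by linarith [hKlb n t]⟩
      rw [Real.dist_eq, e, abs_div, abs_of_pos hpn, div_pow, one_pow]
      gcongr
    · exact tendsto_pow_atTop_nhds_zero_of_lt_one (by norm_num) (by norm_num)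
  -- distance formula for γ₀
  have hγ₀dist : ∀ s t : ℝ, dist (γ₀ s) (γ₀ t) = |clip s - clip t| * d := by
    intro s t
    have h1 : Tendsto (fun n => dist (u s n) (u t n)) atTop (𝓝 (dist (γ₀ s) (γ₀ t))) :=
      (hγ₀ s).dist (hγ₀ t)
    have h2 : ∀ n, dist (u s n) (u t n) = |(K n s : ℝ)/2^n - (K n t : ℝ)/2^n| * d := by
      intro n
      rw [hu]
      rw [geoSeq_distp hcat x y hd n (hKle n s) (hKle n t)]
      have hpn : (0:ℝ) < 2^n := by positivity
      rw [div_sub_div_same, abs_div, abs_of_pos hpn]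
      field_simp
      rfl
    have h3 : Tendsto (fun n => |(K n s : ℝ)/2^n - (K n t : ℝ)/2^n| * d) atTop
        (𝓝 (|clip s - clip t| * d)) :=
      (((hKtend s).sub (hKtend t)).abs).mul_const d
    rw [funext h2] at h1
    exact tendsto_nhds_unique h1 h3
  have hγ₀0 : γ₀ 0 = x := by
    have hc : clip 0 = 0 := hclipid 0 le_rfl (by norm_num)
    have : ∀ n, u 0 n = x := by
      intro n
      show geoSeq hcat x y n (K n 0) = x
      have hk0 : K n 0 = 0 := by simp [hK, hc]
      rw [hk0]
      exact (geoSeq_spec hcat x y hd n).1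
    exact tendsto_nhds_unique (hγ₀ 0) (by rw [funext this]; exact tendsto_const_nhds)
  have hγ₀1 : γ₀ 1 = y := by
    have hc : clip 1 = 1 := hclipid 1 (by norm_num) le_rfl
    have : ∀ n, u 1 n = y := by
      intro n
      show geoSeq hcat x y n (K n 1) = y
      have hk : K n 1 = 2^n := by
        show ⌊clip 1 * 2^n⌋₊ = 2^n
        rw [hc, one_mul, show ((2:ℝ)^n) = ((2^n : ℕ) : ℝ) by push_cast; ring, Nat.floor_natCast]
      rw [hk]
      exact (geoSeq_spec hcat x y hd n).2.1 _ le_rfl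
    exact tendsto_nhds_unique (hγ₀ 1) (by rw [funext this]; exact tendsto_const_nhds)
  refine ⟨fun t => γ₀ (t / d), ?_, ?_, ?_⟩
  · show γ₀ (0 / d) = x
    rw [zero_div]; exact hγ₀0
  · show γ₀ (d / d) = y
    rw [div_self (ne_of_gt h0)]; exact hγ₀1
  · intro s hs t ht
    have hsd : clip (s / d) = s / d :=
      hclipid _ (div_nonneg hs.1 h0.le) ((div_le_one h0).2 hs.2)
    have htd : clip (t / d) = t / d :=
      hclipid _ (div_nonneg ht.1 h0.le) ((div_le_one h0).2 ht.2)
    show dist (γ₀ (s/d)) (γ₀ (t/d)) = |s - t|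
    rw [hγ₀dist, hsd, htd, div_sub_div_same, abs_div, abs_of_pos h0,
      div_mul_cancel₀ _ (ne_of_gt h0)]


lemma dist_le_pi (hdiam : Metric.diam (Set.univ : Set Y) = π) (a b : Y) : dist a b ≤ π := by
  rw [← hdiam]
  exact Metric.dist_le_diam_of_mem isCompact_univ.isBounded trivial trivial

/-- Extension step: a geodesic from ξ of length 0 < L < π can be strictly extended. -/
lemma extend_step (hcat : IsCATOne Y) (hgc : GeodesicallyComplete Y)
    (hdiam : Metric.diam (Set.univ : Set Y) = π)
    {γ : ℝ → Y} {L : ℝ} (hL0 : 0 < L) (hLπ : L < π)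
    (hgeo : ∀ s ∈ Icc (0:ℝ) L, ∀ t ∈ Icc (0:ℝ) L, dist (γ s) (γ t) = |s - t|) :
    ∃ (z : Y) (s : ℝ), 0 < s ∧ dist (γ L) z = s ∧ dist (γ 0) z = L + s := by
  have hloc : IsLocalGeodesicOn γ 0 L := by
    intro t ht
    exact ⟨L, hL0, fun u hu v hv _ _ => hgeo u hu v hv⟩
  obtain ⟨a', b', γ', ha', hb', hloc', hagree⟩ := hgc γ 0 L hL0 hloc
  have hLmem : L ∈ Icc a' b' := ⟨by linarith, hb'.le⟩
  obtain ⟨ε₀, hε₀, hε⟩ := hloc' L hLmem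
  -- choose s
  set s := min ε₀ (min (b' - L) (min L ((π - L)/2))) / 2 with hs
  have hs0 : 0 < s := by
    apply div_pos _ two_pos
    apply lt_min hε₀ (lt_min (by linarith) (lt_min hL0 (by linarith)))
  have hsε : s ≤ ε₀ := by
    have := min_le_left ε₀ (min (b' - L) (min L ((π - L)/2)))
    rw [hs]; linarith
  have hsb : L + s ≤ b' := by
    have h1 := min_le_left (b' - L) (min L ((π - L)/2))
    have h2 := min_le_right ε₀ (min (b' - L) (min L ((π - L)/2)))
    rw [hs]; linarith [lt_min hε₀ (lt_min (by linarith : (0:ℝ) < b' - L) (lt_min hL0 (by linarith : (0:ℝ) < (π - L)/2)))]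
  have hsL : s < L := by
    have h1 := min_le_right (b' - L) (min L ((π - L)/2))
    have h2 := min_le_left L ((π - L)/2)
    have h3 := min_le_right ε₀ (min (b' - L) (min L ((π - L)/2)))
    rw [hs]; linarith
  have hsπ : L + 2*s ≤ π := by
    have h1 := min_le_right (b' - L) (min L ((π - L)/2))
    have h2 := min_le_right L ((π - L)/2)
    have h3 := min_le_right ε₀ (min (b' - L) (min L ((π - L)/2)))
    rw [hs]; linarith
  have hsπ2 : s < π/2 := by nlinarith [Real.pi_pos]
  -- points
  have hγ'L : γ' L = γ L := hagree L ⟨le_of_lt hL0, le_rfl⟩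
  have hγ'Ls : γ' (L - s) = γ (L - s) := hagree (L - s) ⟨by linarith, by linarith⟩
  set x₁ := γ (L - s) with hx₁
  set y₁ := γ' (L + s) with hy₁
  set m0 := γ L with hm0
  have hmemLs : L - s ∈ Icc a' b' := ⟨by linarith, by linarith⟩
  have hmemL : L ∈ Icc a' b' := hLmem
  have hmemLps : L + s ∈ Icc a' b' := ⟨by linarith, hsb⟩
  have habs1 : |L - s - L| ≤ ε₀ := by rw [abs_of_nonpos (by linarith)]; linarith
  have habs2 : |L - L| ≤ ε₀ := by rw [sub_self, abs_zero]; linarith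
  have habs3 : |L + s - L| ≤ ε₀ := by rw [abs_of_nonneg (by linarith)]; linarith
  have hx₁y₁ : dist x₁ y₁ = 2*s := by
    have := hε (L - s) hmemLs (L + s) hmemLps habs1 habs3
    rw [hγ'Ls] at this
    rw [hx₁, hy₁, this]
    rw [abs_of_nonpos (by linarith)]; ring
  have hm0y₁ : dist m0 y₁ = s := by
    have := hε L hmemL (L + s) hmemLps habs2 habs3
    rw [hγ'L] at this
    rw [hm0, hy₁, this, abs_of_nonpos (by linarith)]; ring
  have hx₁m0 : dist x₁ m0 = s := by
    rw [hx₁, hm0, hgeo (L - s) ⟨by linarith, by linarith⟩ L ⟨hL0.le, le_rfl⟩,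
      abs_of_nonpos (by linarith)]; ring
  have hξx₁ : dist (γ 0) x₁ = L - s := by
    rw [hx₁, hgeo 0 ⟨le_rfl, hL0.le⟩ (L - s) ⟨by linarith, by linarith⟩,
      abs_of_nonpos (by linarith)]; ring
  have hξm0 : dist (γ 0) m0 = L := by
    rw [hm0, hgeo 0 ⟨le_rfl, hL0.le⟩ L ⟨hL0.le, le_rfl⟩, abs_of_nonpos (by linarith)]; ring
  -- midpoint from CAT(1)
  have hx₁y₁lt : dist x₁ y₁ < π := by rw [hx₁y₁]; linarith
  obtain ⟨m, hmx, hmy, hcomp⟩ := hcat x₁ y₁ hx₁y₁lt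
  -- m = m0
  have hm0m : m0 = m := by
    have hper : dist m0 x₁ + dist m0 y₁ + dist x₁ y₁ < 2*π := by
      rw [dist_comm m0 x₁, hx₁m0, hm0y₁, hx₁y₁]
      nlinarith [Real.pi_pos]
    have := hcomp m0 hper
    rw [dist_comm m0 x₁] at this
    rw [hx₁m0, hm0y₁, hx₁y₁] at this
    have hcos : Real.cos s ≤ Real.cos (dist m0 m) * Real.cos s := by
      calc Real.cos s = (Real.cos s + Real.cos s)/2 := by ring
        _ ≤ Real.cos (dist m0 m) * Real.cos (2*s/2) := this
        _ = Real.cos (dist m0 m) * Real.cos s := by norm_num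
    have hcs : 0 < Real.cos s := Real.cos_pos_of_mem_Ioo ⟨by linarith, hsπ2⟩
    have h1 : (1:ℝ) ≤ Real.cos (dist m0 m) := by nlinarith
    have h2 : Real.cos (dist m0 m) = 1 := le_antisymm (Real.cos_le_one _) h1
    have h3 : Real.cos (dist m0 m) = Real.cos 0 := by rw [h2, Real.cos_zero]
    have h4 : dist m0 m = 0 := by
      apply Real.injOn_cos ⟨dist_nonneg, dist_le_pi hdiam _ _⟩ ⟨le_rfl, Real.pi_pos.le⟩ h3
    exact dist_eq_zero.mp h4
  -- comparison with ξ
  have hf_le : dist (γ 0) y₁ ≤ L + s := by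
    calc dist (γ 0) y₁ ≤ dist (γ 0) m0 + dist m0 y₁ := dist_triangle _ _ _
      _ = L + s := by rw [hξm0, hm0y₁]
  have hper2 : dist (γ 0) x₁ + dist (γ 0) y₁ + dist x₁ y₁ < 2*π := by
    rw [hξx₁, hx₁y₁]; linarith
  have hcmp := hcomp (γ 0) hper2
  rw [← hm0m, hξx₁, hξm0, hx₁y₁] at hcmp
  have h2s : (2*s/2 : ℝ) = s := by ring
  rw [h2s] at hcmp
  have hcoseq : Real.cos (dist (γ 0) y₁) ≤ Real.cos (L + s) := by
    have hid : Real.cos (L + s) + Real.cos (L - s) = 2 * (Real.cos L * Real.cos s) := by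
      rw [Real.cos_add, Real.cos_sub]; ring
    linarith
  have hfeq : dist (γ 0) y₁ = L + s := by
    have hmono := Real.strictAntiOn_cos.injOn
    have hd1 : dist (γ 0) y₁ ∈ Icc 0 π := ⟨dist_nonneg, dist_le_pi hdiam _ _⟩
    have hd2 : L + s ∈ Icc (0:ℝ) π := ⟨by linarith, by linarith⟩
    rcases lt_trichotomy (dist (γ 0) y₁) (L + s) with h | h | h
    · exfalso
      have := Real.strictAntiOn_cos hd1 hd2 h
      linarith
    · exact h
    · linarith
  exact ⟨y₁, s, hs0, hm0y₁, hfeq⟩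


/-- every point lies on a geodesic from ξ to an antipode of ξ -/
lemma exists_antipode_through (hcat : IsCATOne Y) (hgc : GeodesicallyComplete Y)
    (hdiam : Metric.diam (Set.univ : Set Y) = π) (ξ x : Y) :
    ∃ ξ' : Y, dist ξ ξ' = π ∧ dist ξ x + dist x ξ' = π := by
  set C : Set Y := {y | dist ξ y = dist ξ x + dist x y} with hC
  have hxC : x ∈ C := by simp [hC]
  have hclosed : IsClosed C := by
    apply isClosed_eq
    · exact continuous_const.dist continuous_id
    · exact continuous_const.add (continuous_const.dist continuous_id)
  have hcpt : IsCompact C := hclosed.isCompact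
  obtain ⟨y₀, hy₀C, hy₀max⟩ := hcpt.exists_isMaxOn ⟨x, hxC⟩
    ((continuous_const.dist continuous_id).continuousOn (s := C))
  set L := dist ξ y₀ with hL
  have hLπ : L ≤ π := dist_le_pi hdiam _ _
  have hmax : ∀ y ∈ C, dist ξ y ≤ L := fun y hy => hy₀max hy
  have hL0 : 0 < L := by
    rcases eq_or_lt_of_le (dist_nonneg : (0:ℝ) ≤ L) with h | h
    · exfalso
      have hξx : dist ξ x ≤ 0 := by
        have := hmax x hxC; linarith
      have hxξ : x = ξ := by
        have : dist ξ x = 0 := le_antisymm hξx dist_nonneg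
        exact (dist_eq_zero.mp this).symm
      have hCuniv : ∀ y : Y, y ∈ C := by
        intro y; simp [hC, hxξ]
      have hall : ∀ y : Y, dist ξ y ≤ 0 := by
        intro y
        have := hmax y (hCuniv y); linarith
      have hdle : Metric.diam (Set.univ : Set Y) ≤ 0 := by
        apply Metric.diam_le_of_forall_dist_le le_rfl
        intro a _ b _
        calc dist a b ≤ dist a ξ + dist ξ b := dist_triangle _ _ _
          _ ≤ 0 + 0 := add_le_add (by rw [dist_comm]; exact hall a) (hall b)
          _ = 0 := by ring
      rw [hdiam] at hdle
      exact absurd hdle (not_le.mpr Real.pi_pos)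
    · exact h
  rcases eq_or_lt_of_le hLπ with hLeq | hLlt
  · exact ⟨y₀, hLeq, by have := hy₀C; rw [hC] at this; rw [← this]; exact hLeq⟩
  · exfalso
    obtain ⟨γ, hγ0, hγL, hγgeo⟩ := exists_geodesic hcat ξ y₀ hLlt
    obtain ⟨z, s, hs0, hdz, hdξz⟩ := extend_step hcat hgc hdiam hL0 hLlt hγgeo
    rw [hγ0] at hdξz
    rw [hγL] at hdz
    have hzC : z ∈ C := by
      have h1 : dist ξ z ≤ dist ξ x + dist x z := dist_triangle _ _ _
      have h2 : dist ξ x + dist x z ≤ dist ξ x + dist x y₀ + dist y₀ z := by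
        linarith [dist_triangle x y₀ z]
      have h3 : dist ξ x + dist x y₀ = L := hy₀C.symm
      rw [hC]
      simp only [mem_setOf_eq]
      rw [hdξz] at h1 ⊢
      rw [hdz] at h2
      linarith
    have := hmax z hzC
    rw [hdξz] at this
    linarith

theorem statement0aux (hcat : IsCATOne Y) (hgc : GeodesicallyComplete Y)
    (hdiam : Metric.diam (Set.univ : Set Y) = π) (ξ η : Y) :
    sSup {s : ℝ | ∃ x : Y, s = dist ξ x + dist η x - π} =
      sSup ((fun x => dist x η) '' {x : Y | dist ξ x = π}) := by
  set S₁ := {s : ℝ | ∃ x : Y, s = dist ξ x + dist η x - π} with hS₁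
  set S₂ := (fun x => dist x η) '' {x : Y | dist ξ x = π} with hS₂
  have hbdd₁ : BddAbove S₁ := by
    refine ⟨π, fun v hv => ?_⟩
    obtain ⟨x, rfl⟩ := hv
    have h1 := dist_le_pi hdiam ξ x
    have h2 := dist_le_pi hdiam η x
    linarith
  have hbdd₂ : BddAbove S₂ := by
    refine ⟨π, fun v hv => ?_⟩
    obtain ⟨x, _, rfl⟩ := hv
    exact dist_le_pi hdiam x η
  have hsub : S₂ ⊆ S₁ := by
    rintro v ⟨x, hx, rfl⟩
    exact ⟨x, by rw [mem_setOf_eq] at hx; rw [hx, dist_comm η x]; ring⟩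
  obtain ⟨ξ₀, hξ₀, _⟩ := exists_antipode_through hcat hgc hdiam ξ ξ
  have hne₂ : S₂.Nonempty := ⟨dist ξ₀ η, ξ₀, hξ₀, rfl⟩
  have hne₁ : S₁.Nonempty := hne₂.mono hsub
  apply le_antisymm
  · apply csSup_le hne₁
    rintro v ⟨x, rfl⟩
    obtain ⟨ξ', hξ', hbet⟩ := exists_antipode_through hcat hgc hdiam ξ x
    have h1 : dist η x ≤ dist η ξ' + dist ξ' x := dist_triangle _ _ _
    have h2 : dist ξ x + dist η x - π ≤ dist ξ' η := by
      have h3 : dist x ξ' = π - dist ξ x := by linarith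
      rw [dist_comm ξ' η]
      rw [dist_comm ξ' x] at h1
      linarith
    exact le_trans h2 (le_csSup hbdd₂ ⟨ξ', hξ', rfl⟩)
  · exact csSup_le_csSup hbdd₁ hne₂ hsub


end Statement0Aux
end Statement0Aux

/-- Lemma 4.1: on a compact geodesically complete CAT(1) space of
diameter `π`, the antipodal distance `‖ξη‖ = sup_x (|ξx| + |ηx| - π)` equals the supremum
of `|ξ̄η|` over all antipodes `ξ̄` of `ξ`. -/
theorem statement0 (Y : Type*) [MetricSpace Y] [CompactSpace Y]
    (hcat : IsCATOne Y) (hgc : GeodesicallyComplete Y)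
    (hdiam : Metric.diam (Set.univ : Set Y) = π) (ξ η : Y) :
    antDist ξ η = sSup ((fun x => dist x η) '' Ant ξ) := by
  exact Statement0Aux.statement0aux hcat hgc hdiam ξ η
end

section
/- Let Σ be a compact, geodesically complete CAT(1) space with diameter π and let {ξ_i}_{i=1}^k be an (ε,δ)-noncritical collection in Σ with regular direction η. Then |ξ_iξ_j| > π/2 − δ and |ξ_iη| > π/2 + ε for all i ≠ j. Moreover, if k ≥ 2 and δ < ε/2, then also |ξ_iξ_j| < π − 2ε and |ξ_iη| < π − ε/2 for all i ≠ j. -/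
/-!
Common definitions for the formalization of
"Regularity of distance maps on geodesically complete spaces with curvature bounded above".

We set up, from scratch, the metric-geometric notions used in the paper:
comparison angles, (upper) Alexandrov angles, geodesic completeness, CAT(1) and CAT(κ)
comparison (via existence of midpoints satisfying the model median comparison inequality),
GCBA spaces, tiny balls, the antipodal distance, strainers and noncritical distance maps.

Directions at a point `p` (elements of the space of directions `Σ_p`) are represented by
points `x ≠ p`, via the (unique, in the situations considered) shortest path from `p` to `x`;
by local geodesic completeness such directions are dense in `Σ_p`, so distances and
suprema over `Σ_p` are faithfully expressed through angles `∠(a, p, x)` and suprema over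
points `x` near `p`.  The local dimension `dim T_p` of the tangent cone at `p` is expressed
as the infimum of the Hausdorff dimensions of small balls around `p`, which for GCBA spaces
coincides with `dim T_p` by the results of Lytchak–Nagano.
-/

open Metric Filter Set Topology
open scoped ENNReal NNReal Real

private lemma exists_geodesic {Y : Type*} [MetricSpace Y] [CompactSpace Y]
    (hcat : IsCATOne Y) (x y : Y) (hd : 0 < dist x y) (hπ : dist x y < π) :
    ∃ γ : ℝ → Y, γ 0 = x ∧ γ (dist x y) = y ∧
      ∀ u ∈ Set.Icc (0:ℝ) (dist x y), ∀ v ∈ Set.Icc (0:ℝ) (dist x y),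
        dist (γ u) (γ v) = |u - v| := by
  classical
  set d := dist x y with hdd
  have midex : ∀ p q : Y, ∃ m : Y,
      dist p q < π → dist p m = dist p q / 2 ∧ dist q m = dist p q / 2 := by
    intro p q
    by_cases h : dist p q < π
    · obtain ⟨m, h1, h2, -⟩ := hcat p q h
      exact ⟨m, fun _ => ⟨h1, h2⟩⟩
    · exact ⟨p, fun h' => absurd h' h⟩
  choose mid hmid using midex
  let c : ℕ → ℕ → Y := fun n =>
    Nat.rec (motive := fun _ => ℕ → Y) (fun k => if k = 0 then x else y)
      (fun _ cn k => if k % 2 = 0 then cn (k / 2) else mid (cn (k / 2)) (cn (k / 2 + 1))) n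
  have c_zero : ∀ k, c 0 k = if k = 0 then x else y := fun _ => rfl
  have c_succ : ∀ n k, c (n + 1) k =
      if k % 2 = 0 then c n (k / 2) else mid (c n (k / 2)) (c n (k / 2 + 1)) := fun _ _ => rfl
  have hd2 : ∀ n : ℕ, (0:ℝ) < 2 ^ n := fun n => by positivity
  have hdiv_lt : ∀ n : ℕ, d / 2 ^ n < π := fun n =>
    lt_of_le_of_lt (div_le_self hd.le (one_le_pow₀ (by norm_num))) hπ
  have key : ∀ n : ℕ, c n 0 = x ∧ c n (2 ^ n) = y ∧
      ∀ k, k < 2 ^ n → dist (c n k) (c n (k + 1)) = d / 2 ^ n := by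
    intro n
    induction n with
    | zero =>
      refine ⟨by simp [c_zero], by simp [c_zero], ?_⟩
      intro k hk
      have : k = 0 := by omega
      subst this
      simp [c_zero, hdd]
    | succ n ih =>
      obtain ⟨ih0, ih1, ihc⟩ := ih
      refine ⟨?_, ?_, ?_⟩
      · rw [c_succ, if_pos (by omega)]
        simpa using ih0
      · have e : 2 ^ (n + 1) = 2 ^ n * 2 := by ring
        rw [c_succ, e, if_pos (Nat.mul_mod_left _ _), Nat.mul_div_cancel _ (by norm_num)]
        exact ih1
      · intro k hk
        rcases Nat.even_or_odd k with ⟨j, hj⟩ | ⟨j, hj⟩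
        · have hj2 : j < 2 ^ n := by
            have : 2 ^ (n + 1) = 2 ^ n * 2 := by ring
            omega
          have hlt : dist (c n j) (c n (j + 1)) < π := by
            rw [ihc j hj2]; exact hdiv_lt n
          rw [c_succ, c_succ, if_pos (by omega), if_neg (by omega),
            show k / 2 = j by omega, show (k + 1) / 2 = j by omega]
          rw [(hmid _ _ hlt).1, ihc j hj2, pow_succ]
          ring
        · have hj2 : j < 2 ^ n := by
            have : 2 ^ (n + 1) = 2 ^ n * 2 := by ring
            omega
          have hlt : dist (c n j) (c n (j + 1)) < π := by
            rw [ihc j hj2]; exact hdiv_lt n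
          rw [c_succ, c_succ, if_neg (by omega), if_pos (by omega),
            show k / 2 = j by omega, show (k + 1) / 2 = j + 1 by omega]
          rw [dist_comm, (hmid _ _ hlt).2, ihc j hj2, pow_succ]
          ring
  have chain : ∀ n m k : ℕ, k + m ≤ 2 ^ n →
      dist (c n k) (c n (k + m)) ≤ m * (d / 2 ^ n) := by
    intro n m
    induction m with
    | zero => intro k _; simp
    | succ m ih =>
      intro k h
      calc dist (c n k) (c n (k + (m + 1)))
          ≤ dist (c n k) (c n (k + m)) + dist (c n (k + m)) (c n (k + m + 1)) := by
            rw [show k + (m + 1) = k + m + 1 by omega]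
            exact dist_triangle _ _ _
        _ ≤ m * (d / 2 ^ n) + d / 2 ^ n :=
            add_le_add (ih k (by omega)) (le_of_eq ((key n).2.2 (k + m) (by omega)))
        _ = (↑(m + 1) : ℝ) * (d / 2 ^ n) := by push_cast; ring
  have hexact : ∀ n k j : ℕ, k ≤ j → j ≤ 2 ^ n →
      dist (c n k) (c n j) = ((j : ℝ) - k) * (d / 2 ^ n) := by
    intro n k j hkj hj
    have hub : dist (c n k) (c n j) ≤ ((j : ℝ) - k) * (d / 2 ^ n) := by
      have h1 := chain n (j - k) k (by omega)
      rw [show k + (j - k) = j by omega] at h1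
      calc dist (c n k) (c n j) ≤ ((j - k : ℕ) : ℝ) * (d / 2 ^ n) := h1
        _ = ((j : ℝ) - k) * (d / 2 ^ n) := by rw [Nat.cast_sub hkj]
    have h1 := chain n k 0 (by omega)
    rw [zero_add] at h1
    have h2 := chain n (2 ^ n - j) j (by omega)
    rw [show j + (2 ^ n - j) = 2 ^ n by omega] at h2
    have h2' : dist (c n j) (c n (2 ^ n)) ≤ ((2:ℝ) ^ n - j) * (d / 2 ^ n) := by
      calc dist (c n j) (c n (2 ^ n)) ≤ ((2 ^ n - j : ℕ) : ℝ) * (d / 2 ^ n) := h2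
        _ = ((2:ℝ) ^ n - j) * (d / 2 ^ n) := by
            rw [Nat.cast_sub hj]; push_cast; ring
    have h3 : dist (c n 0) (c n (2 ^ n)) = d := by rw [(key n).1, (key n).2.1]
    have h4 := dist_triangle4 (c n 0) (c n k) (c n j) (c n (2 ^ n))
    have h5 : (2:ℝ) ^ n * (d / 2 ^ n) = d := by field_simp
    have hlb : ((j : ℝ) - k) * (d / 2 ^ n) ≤ dist (c n k) (c n j) := by nlinarith
    linarith
  have hexact' : ∀ n k j : ℕ, k ≤ 2 ^ n → j ≤ 2 ^ n →
      dist (c n k) (c n j) = |(k : ℝ) - j| * (d / 2 ^ n) := by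
    intro n k j hk hj
    rcases le_total k j with h | h
    · rw [hexact n k j h hj, abs_sub_comm,
        abs_of_nonneg (sub_nonneg.2 (by exact_mod_cast Nat.cast_le.2 h))]
    · rw [dist_comm, hexact n j k h hk,
        abs_of_nonneg (sub_nonneg.2 (by exact_mod_cast Nat.cast_le.2 h))]
  have lift : ∀ n p k : ℕ, c (n + p) (k * 2 ^ p) = c n k := by
    intro n p
    induction p with
    | zero => intro k; simp
    | succ p ih =>
      intro k
      rw [show n + (p + 1) = (n + p) + 1 by omega, c_succ,
        show k * 2 ^ (p + 1) = k * 2 ^ p * 2 by ring,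
        if_pos (Nat.mul_mod_left _ _), Nat.mul_div_cancel _ (by norm_num)]
      exact ih k
  set cl : ℝ → ℝ := fun t => max 0 (min t d) with hcl
  have cl_mem : ∀ t, cl t ∈ Set.Icc (0:ℝ) d :=
    fun t => ⟨le_max_left _ _, max_le hd.le (min_le_right t d)⟩
  have cl_eq : ∀ t ∈ Set.Icc (0:ℝ) d, cl t = t := fun t ht => by
    simp only [hcl]; rw [min_eq_left ht.2, max_eq_right ht.1]
  set kn : ℕ → ℝ → ℕ := fun n t => ⌊cl t * 2 ^ n / d⌋₊ with hkn
  have kn_le : ∀ n t, kn n t ≤ 2 ^ n := by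
    intro n t
    have h1 : cl t * 2 ^ n / d ≤ ((2 ^ n : ℕ) : ℝ) := by
      rw [div_le_iff₀ hd]
      push_cast
      nlinarith [(cl_mem t).2, hd2 n]
    calc kn n t ≤ ⌊((2 ^ n : ℕ) : ℝ)⌋₊ := Nat.floor_mono h1
      _ = 2 ^ n := Nat.floor_natCast _
  set pos : ℕ → ℝ → ℝ := fun n t => (kn n t : ℝ) * (d / 2 ^ n) with hpos
  have kn_approx : ∀ n t, |pos n t - cl t| ≤ d / 2 ^ n := by
    intro n t
    have h0 : 0 ≤ cl t * 2 ^ n / d :=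
      div_nonneg (mul_nonneg (cl_mem t).1 (hd2 n).le) hd.le
    have h1 : (kn n t : ℝ) * d ≤ cl t * 2 ^ n := (le_div_iff₀ hd).1 (Nat.floor_le h0)
    have h2 : cl t * 2 ^ n < ((kn n t : ℝ) + 1) * d := by
      have h2' := Nat.lt_floor_add_one (cl t * 2 ^ n / d)
      simp only [hkn]
      calc cl t * 2 ^ n = cl t * 2 ^ n / d * d := by field_simp
        _ < (↑⌊cl t * 2 ^ n / d⌋₊ + 1) * d := mul_lt_mul_of_pos_right h2' hd
    have hA : pos n t ≤ cl t := by
      rw [hpos]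
      simp only []
      rw [mul_div_assoc', div_le_iff₀ (hd2 n)]
      linarith
    have hB : cl t < pos n t + d / 2 ^ n := by
      have : cl t < ((kn n t : ℝ) + 1) * d / 2 ^ n := by
        rw [lt_div_iff₀ (hd2 n)]; linarith
      calc cl t < ((kn n t : ℝ) + 1) * d / 2 ^ n := this
        _ = pos n t + d / 2 ^ n := by rw [hpos]; ring
    rw [abs_le]
    have : 0 ≤ d / 2 ^ n := by positivity
    constructor <;> linarith
  have seq_dist : ∀ (t : ℝ) (n m : ℕ),
      dist (c n (kn n t)) (c m (kn m t)) ≤ d / 2 ^ n + d / 2 ^ m := by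
    intro t n m
    have l1 : c n (kn n t) = c (n + m) (kn n t * 2 ^ m) := (lift n m _).symm
    have l2 : c m (kn m t) = c (n + m) (kn m t * 2 ^ n) := by
      rw [Nat.add_comm n m]; exact (lift m n _).symm
    have b1 : kn n t * 2 ^ m ≤ 2 ^ (n + m) := by
      rw [pow_add]; exact Nat.mul_le_mul_right _ (kn_le n t)
    have b2 : kn m t * 2 ^ n ≤ 2 ^ (n + m) := by
      rw [pow_add, Nat.mul_comm (2 ^ n)]; exact Nat.mul_le_mul_right _ (kn_le m t)
    rw [l1, l2, hexact' (n + m) _ _ b1 b2]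
    have e0 : (0:ℝ) ≤ d / 2 ^ (n + m) := by positivity
    have e1 : ((kn n t * 2 ^ m : ℕ) : ℝ) * (d / 2 ^ (n + m)) = pos n t := by
      push_cast
      rw [hpos, pow_add]
      field_simp
    have e2 : ((kn m t * 2 ^ n : ℕ) : ℝ) * (d / 2 ^ (n + m)) = pos m t := by
      push_cast
      rw [hpos, pow_add]
      field_simp
    have : |((kn n t * 2 ^ m : ℕ) : ℝ) - ((kn m t * 2 ^ n : ℕ) : ℝ)| * (d / 2 ^ (n + m))
        = |pos n t - pos m t| := by
      rw [← abs_of_nonneg e0, ← abs_mul, sub_mul, e1, e2]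
    rw [this]
    calc |pos n t - pos m t| ≤ |pos n t - cl t| + |cl t - pos m t| := abs_sub_le _ _ _
      _ ≤ d / 2 ^ n + d / 2 ^ m := by
          have := kn_approx n t
          have h2 := kn_approx m t
          rw [abs_sub_comm] at h2
          linarith
  have tends0 : Tendsto (fun n : ℕ => d / 2 ^ n) atTop (𝓝 0) := by
    have h := (tendsto_pow_atTop_nhds_zero_of_lt_one
      (by norm_num : (0:ℝ) ≤ 2⁻¹) (by norm_num : (2:ℝ)⁻¹ < 1)).const_mul d
    simpa [div_eq_mul_inv, ← inv_pow] using h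
  have cauchy : ∀ t : ℝ, CauchySeq (fun n => c n (kn n t)) := by
    intro t
    apply cauchySeq_of_le_tendsto_0 (fun N => d / 2 ^ N + d / 2 ^ N)
    · intro n m N hn hm
      have h1 : d / 2 ^ n ≤ d / 2 ^ N :=
        div_le_div_of_nonneg_left hd.le (hd2 N) (pow_le_pow_right₀ (by norm_num) hn)
      have h2 : d / 2 ^ m ≤ d / 2 ^ N :=
        div_le_div_of_nonneg_left hd.le (hd2 N) (pow_le_pow_right₀ (by norm_num) hm)
      calc dist (c n (kn n t)) (c m (kn m t)) ≤ d / 2 ^ n + d / 2 ^ m := seq_dist t n m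
        _ ≤ d / 2 ^ N + d / 2 ^ N := add_le_add h1 h2
    · simpa using tends0.add tends0
  have hconv : ∀ t : ℝ, ∃ p : Y, Tendsto (fun n => c n (kn n t)) atTop (𝓝 p) :=
    fun t => cauchySeq_tendsto_of_complete (cauchy t)
  choose γ hγl using hconv
  have pos_tend : ∀ t ∈ Set.Icc (0:ℝ) d, Tendsto (fun n => pos n t) atTop (𝓝 t) := by
    intro t ht
    have h0 : Tendsto (fun n => pos n t - t) atTop (𝓝 0) := by
      apply squeeze_zero_norm _ tends0
      intro n
      rw [Real.norm_eq_abs]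
      simpa [cl_eq t ht] using kn_approx n t
    simpa using h0.add (tendsto_const_nhds (x := t))
  refine ⟨γ, ?_, ?_, ?_⟩
  · have h0 : ∀ n, c n (kn n 0) = x := by
      intro n
      have e1 : cl 0 = 0 := cl_eq 0 ⟨le_rfl, hd.le⟩
      have e2 : kn n 0 = 0 := by simp [hkn, e1]
      rw [e2]; exact (key n).1
    have : Tendsto (fun n => c n (kn n 0)) atTop (𝓝 x) := by
      rw [funext h0]; exact tendsto_const_nhds
    exact tendsto_nhds_unique (hγl 0) this
  · have h0 : ∀ n, c n (kn n d) = y := by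
      intro n
      have e1 : cl d = d := cl_eq d ⟨hd.le, le_rfl⟩
      have e2 : kn n d = 2 ^ n := by
        simp only [hkn, e1]
        rw [mul_comm, mul_div_assoc, div_self hd.ne', mul_one,
          show ((2:ℝ) ^ n) = ((2 ^ n : ℕ) : ℝ) by push_cast; ring, Nat.floor_natCast]
      rw [e2]; exact (key n).2.1
    have : Tendsto (fun n => c n (kn n d)) atTop (𝓝 y) := by
      rw [funext h0]; exact tendsto_const_nhds
    exact tendsto_nhds_unique (hγl d) this
  · intro u hu v hv
    have htend : Tendsto (fun n => dist (c n (kn n u)) (c n (kn n v))) atTop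
        (𝓝 (dist (γ u) (γ v))) := (hγl u).dist (hγl v)
    have heq : ∀ n, dist (c n (kn n u)) (c n (kn n v)) = |pos n u - pos n v| := by
      intro n
      rw [hexact' n _ _ (kn_le n u) (kn_le n v),
        ← abs_of_nonneg (show (0:ℝ) ≤ d / 2 ^ n by positivity), ← abs_mul, sub_mul]
    have htend2 : Tendsto (fun n => |pos n u - pos n v|) atTop (𝓝 |u - v|) :=
      ((pos_tend u hu).sub (pos_tend v hv)).abs
    have h1 : Tendsto (fun n => |pos n u - pos n v|) atTop (𝓝 (dist (γ u) (γ v))) := by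
      rw [← funext heq]; exact htend
    exact tendsto_nhds_unique h1 htend2

private lemma dist_le_pi {Y : Type*} [MetricSpace Y] [CompactSpace Y]
    (hdiam : Metric.diam (Set.univ : Set Y) = π) (a b : Y) : dist a b ≤ π := by
  calc dist a b ≤ Metric.diam (Set.univ : Set Y) :=
        Metric.dist_le_diam_of_mem isCompact_univ.isBounded trivial trivial
    _ = π := hdiam

private lemma exists_antipode {Y : Type*} [MetricSpace Y] [CompactSpace Y]
    (hcat : IsCATOne Y) (hgc : GeodesicallyComplete Y)
    (hdiam : Metric.diam (Set.univ : Set Y) = π) (ξ : Y) : ∃ x : Y, dist ξ x = π := by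
  have hle : ∀ a b : Y, dist a b ≤ π := dist_le_pi hdiam
  have hne : Nonempty Y := by
    by_contra hny
    rw [not_nonempty_iff] at hny
    have he : (Set.univ : Set Y) = ∅ := Set.univ_eq_empty_iff.2 hny
    rw [he, Metric.diam_empty] at hdiam
    exact Real.pi_ne_zero hdiam.symm
  obtain ⟨x₀, -, hx₀⟩ := isCompact_univ.exists_isMaxOn Set.univ_nonempty
    (continuous_const.dist continuous_id).continuousOn (f := fun z : Y => dist ξ z)
  set R := dist ξ x₀ with hR
  have hub : ∀ z : Y, dist ξ z ≤ R := fun z => hx₀ (Set.mem_univ z)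
  by_contra hR'
  push_neg at hR'
  have hRlt : R < π := lt_of_le_of_ne (hle _ _) (hR' x₀)
  have hR2 : π ≤ 2 * R := by
    have h := Metric.diam_le_of_forall_dist_le (s := (Set.univ : Set Y))
      (C := 2 * R) (by positivity) (fun a _ b _ => by
        calc dist a b ≤ dist a ξ + dist ξ b := dist_triangle _ _ _
          _ ≤ 2 * R := by
              have h1 := hub a
              have h2 := hub b
              rw [dist_comm a ξ]
              linarith)
    rw [hdiam] at h
    exact h
  have hRpos : 0 < R := by nlinarith [Real.pi_pos]
  obtain ⟨γ, hγ0, hγd, hγ⟩ := exists_geodesic hcat ξ x₀ hRpos hRlt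
  have hloc : IsLocalGeodesicOn γ 0 R :=
    fun t _ => ⟨1, one_pos, fun u hu v hv _ _ => hγ u hu v hv⟩
  obtain ⟨a', b', γ', ha', hb', hloc', hagree⟩ := hgc γ 0 R hRpos hloc
  obtain ⟨ε', hε', hε'loc⟩ := hloc' R ⟨by linarith, hb'.le⟩
  set s := min ε' (min (b' - R) (min (π - R) R)) / 2 with hs
  have hmin : 0 < min ε' (min (b' - R) (min (π - R) R)) :=
    lt_min hε' (lt_min (by linarith) (lt_min (by linarith) hRpos))
  have hs0 : 0 < s := by rw [hs]; linarith
  have hsε : s ≤ ε' := by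
    have := min_le_left ε' (min (b' - R) (min (π - R) R)); rw [hs]; linarith
  have hsb : R + s < b' := by
    have h1 := (min_le_right ε' _).trans (min_le_left (b' - R) (min (π - R) R))
    rw [hs]; rw [hs] at hs0; linarith
  have hsπ : R + s < π := by
    have h1 := (min_le_right ε' _).trans ((min_le_right (b' - R) _).trans
      (min_le_left (π - R) R))
    rw [hs]; rw [hs] at hs0; linarith
  have hsR : s < R := by
    have h1 := (min_le_right ε' _).trans ((min_le_right (b' - R) _).trans
      (min_le_right (π - R) R))
    rw [hs]; rw [hs] at hs0; linarith
  have hsπ2 : s < π / 2 := by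
    have h1 := (min_le_right ε' _).trans ((min_le_right (b' - R) _).trans
      (min_le_left (π - R) R))
    rw [hs]; linarith
  have hmem : ∀ u : ℝ, 0 ≤ u → u ≤ R + s → u ∈ Set.Icc a' b' :=
    fun u h1 h2 => ⟨by linarith, by linarith⟩
  have hγ'R : γ' R = x₀ := by
    rw [hagree R ⟨hRpos.le, le_rfl⟩, hγd]
  have d1 : dist (γ' (R - s)) x₀ = s := by
    rw [← hγ'R]
    rw [hε'loc (R - s) (hmem _ (by linarith) (by linarith)) R (hmem _ hRpos.le (by linarith))
      (by rw [abs_of_nonpos (by linarith)]; simp [abs_of_nonneg hs0.le]; linarith)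
      (by simp [hε'.le])]
    rw [abs_of_nonpos (by linarith)]
    ring
  have d2 : dist x₀ (γ' (R + s)) = s := by
    rw [← hγ'R]
    rw [hε'loc R (hmem _ hRpos.le (by linarith)) (R + s) (hmem _ (by linarith) le_rfl)
      (by simp [hε'.le]) (by rw [abs_of_nonneg (by linarith)]; linarith)]
    rw [abs_of_nonpos (by linarith)]
    ring
  have d3 : dist (γ' (R - s)) (γ' (R + s)) = 2 * s := by
    rw [hε'loc (R - s) (hmem _ (by linarith) (by linarith)) (R + s)
      (hmem _ (by linarith) le_rfl)
      (by rw [abs_of_nonpos (by linarith)]; simp [abs_of_nonneg hs0.le]; linarith)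
      (by rw [abs_of_nonneg (by linarith)]; linarith)]
    rw [abs_of_nonpos (by linarith)]
    ring
  have dξm : dist ξ (γ' (R - s)) = R - s := by
    rw [hagree (R - s) ⟨by linarith, by linarith⟩]
    have := hγ 0 ⟨le_rfl, hRpos.le⟩ (R - s) ⟨by linarith, by linarith⟩
    rw [hγ0] at this
    rw [this, abs_of_nonpos (by linarith)]
    ring
  set m' := γ' (R - s)
  set y := γ' (R + s)
  obtain ⟨w, hw1, hw2, hw3⟩ := hcat m' y (by rw [d3]; linarith)
  have hcs : 0 < Real.cos s := Real.cos_pos_of_mem_Ioo ⟨by linarith, hsπ2⟩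
  have hwx : w = x₀ := by
    have hper : dist x₀ m' + dist x₀ y + dist m' y < 2 * π := by
      rw [dist_comm x₀ m', d1, d2, d3]; linarith
    have hmed := hw3 x₀ hper
    rw [dist_comm x₀ m'] at hmed
    rw [d1, d2, d3] at hmed
    have e : 2 * s / 2 = s := by ring
    rw [e] at hmed
    have h1 : 1 ≤ Real.cos (dist x₀ w) := by nlinarith
    have h0 : dist x₀ w = 0 := by
      by_contra hc
      have hD : 0 < dist x₀ w := dist_nonneg.lt_of_ne (Ne.symm hc)
      have := Real.strictAntiOn_cos ⟨le_rfl, Real.pi_pos.le⟩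
        ⟨dist_nonneg, hle x₀ w⟩ hD
      rw [Real.cos_zero] at this
      linarith
    exact (dist_eq_zero.1 h0).symm
  rw [hwx] at hw3
  have hyle : dist ξ y ≤ R := hub y
  have hper2 : dist ξ m' + dist ξ y + dist m' y < 2 * π := by
    rw [dξm, d3]; linarith
  have hmed := hw3 ξ hper2
  rw [dξm, d3, ← hR] at hmed
  have e : 2 * s / 2 = s := by ring
  rw [e] at hmed
  have hid : Real.cos (R - s) + Real.cos (R + s) = 2 * Real.cos R * Real.cos s := by
    rw [Real.cos_sub, Real.cos_add]; ring
  have hcosy : Real.cos (dist ξ y) ≤ Real.cos (R + s) := by linarith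
  have h1 : Real.cos R ≤ Real.cos (dist ξ y) :=
    Real.cos_le_cos_of_nonneg_of_le_pi dist_nonneg hRlt.le hyle
  have h2 : Real.cos (R + s) < Real.cos R :=
    Real.cos_lt_cos_of_nonneg_of_le_pi hRpos.le hsπ.le (by linarith)
  linarith

/-- Remark 4.3: if `{ξ_i}` is an `(ε, δ)`-noncritical collection with
regular direction `η` in a compact geodesically complete CAT(1) space of diameter `π`, then
`|ξ_i ξ_j| > π/2 - δ` for `i ≠ j` and `|ξ_i η| > π/2 + ε`; moreover, if `k ≥ 2` and
`δ < ε / 2`, then also `|ξ_i ξ_j| < π - 2ε` for `i ≠ j` and `|ξ_i η| < π - ε/2`. -/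
theorem statement1 (Y : Type*) [MetricSpace Y] [CompactSpace Y]
    (hcat : IsCATOne Y) (hgc : GeodesicallyComplete Y)
    (hdiam : Metric.diam (Set.univ : Set Y) = π)
    (k : ℕ) (ξ : Fin k → Y) (η : Y) (ε δ : ℝ) (hε : 0 < ε) (hδ : 0 < δ)
    (h : IsNoncritColl ξ η ε δ) :
    (∀ i j, i ≠ j → π / 2 - δ < dist (ξ i) (ξ j)) ∧
    (∀ i, π / 2 + ε < dist (ξ i) η) ∧
    (2 ≤ k → δ < ε / 2 →
      (∀ i j, i ≠ j → dist (ξ i) (ξ j) < π - 2 * ε) ∧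
      ∀ i, dist (ξ i) η < π - ε / 2) := by
  have hle : ∀ a b : Y, dist a b ≤ π := dist_le_pi hdiam
  have hbdd : ∀ p q : Y, BddAbove {s : ℝ | ∃ x : Y, s = dist p x + dist q x - π} := by
    intro p q
    refine ⟨π, ?_⟩
    rintro s ⟨x, rfl⟩
    have h1 := hle p x
    have h2 := hle q x
    have := Real.pi_pos
    linarith
  have hmem : ∀ p q x : Y, dist p x + dist q x - π ≤ antDist p q :=
    fun p q x => le_csSup (hbdd p q) ⟨x, rfl⟩
  have hlow : ∀ p q : Y, π - dist p q ≤ antDist p q := by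
    intro p q
    obtain ⟨x, hx⟩ := exists_antipode hcat hgc hdiam p
    have ht : dist p x ≤ dist p q + dist q x := dist_triangle p q x
    have hm := hmem p q x
    linarith
  obtain ⟨h1, h2⟩ := h
  have A : ∀ i j, i ≠ j → π / 2 - δ < dist (ξ i) (ξ j) := by
    intro i j hij
    have := h1 i j hij
    have := hlow (ξ i) (ξ j)
    linarith
  have B : ∀ i, π / 2 + ε < dist (ξ i) η := by
    intro i
    have := h2 i
    have := hlow (ξ i) η
    linarith
  refine ⟨A, B, fun hk hδε => ⟨?_, ?_⟩⟩
  · intro i j hij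
    have hm := hmem (ξ i) η (ξ j)
    rw [dist_comm η (ξ j)] at hm
    have := B j
    have := h2 i
    linarith
  · intro i
    haveI : Nontrivial (Fin k) := Fin.nontrivial_iff_two_le.mpr hk
    obtain ⟨j, hj⟩ := exists_ne i
    have hm := hmem (ξ i) (ξ j) η
    have := B j
    have := h1 i j (Ne.symm hj)
    linarith
end
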